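/- Let C be a real symmetric positive semidefinite n×n matrix with trace(C) = n, let α ∈ (0,1), and let X be a real n×p matrix. Let Q be any real orthogonal n×n matrix and D any nonnegative diagonal matrix with C = QᵀDQ; write zᵢᵀ for the i-th row of Z = QX and Vᵢ = zᵢzᵢᵀ. Then Xᵀ (C + (α⁻¹ − 1)Iₙ)⁻¹ X − (α/n) · (Σᵢ Vᵢ^{1/2})² is positive semidefinite, where Vᵢ^{1/2} denotes the PSD square root of Vᵢ. -/

import Mathlib

/-!
With `Z = QX` and `cᵢ = dᵢ + α⁻¹ - 1 > 0`, the first term is `Zᵀ diag(c)⁻¹ Z`, whose quadratic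
form at `x` is `Σ (Zx)ᵢ² / cᵢ`, and `Σ cᵢ = trace C + n(α⁻¹ - 1) = n/α`. Since `Wᵢ` is symmetric
with `Wᵢ² = zᵢzᵢᵀ`, `‖Wᵢx‖ = |(Zx)ᵢ|`. The triangle inequality and Sedrakyan's form of
Cauchy–Schwarz then give `‖Σ Wᵢx‖² / Σ cᵢ ≤ Σ ‖Wᵢx‖² / cᵢ`, which is the claim at `x`.
-/

open Matrix

theorem norm_sum_sq_div_le_sum_norm_sq_div {ι E : Type*} [SeminormedAddCommGroup E]
    (s : Finset ι) (v : ι → E) {c : ι → ℝ} (hc : ∀ i ∈ s, 0 < c i) :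
    ‖∑ i ∈ s, v i‖ ^ 2 / ∑ i ∈ s, c i ≤ ∑ i ∈ s, ‖v i‖ ^ 2 / c i := by
  have hsum : 0 ≤ ∑ i ∈ s, c i := Finset.sum_nonneg fun i hi => (hc i hi).le
  calc ‖∑ i ∈ s, v i‖ ^ 2 / ∑ i ∈ s, c i
      ≤ (∑ i ∈ s, ‖v i‖) ^ 2 / ∑ i ∈ s, c i := by gcongr; exact norm_sum_le s v
    _ ≤ ∑ i ∈ s, ‖v i‖ ^ 2 / c i := Finset.sq_sum_div_le_sum_sq_div s _ hc

namespace Matrix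

variable {m n : Type*} [Fintype m] [Fintype n]

theorem dotProduct_transpose_mul_mul_mulVec {R : Type*} [CommSemiring R] (A : Matrix m n R)
    (B : Matrix m m R) (x : n → R) : x ⬝ᵥ (Aᵀ * B * A) *ᵥ x = (A *ᵥ x) ⬝ᵥ B *ᵥ (A *ᵥ x) := by
  rw [← mulVec_mulVec, ← mulVec_mulVec, dotProduct_mulVec, vecMul_transpose]

theorem dotProduct_diagonal_mulVec {R : Type*} [CommSemiring R] [DecidableEq m] (e y : m → R) :
    y ⬝ᵥ diagonal e *ᵥ y = ∑ i, e i * y i ^ 2 := by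
  simp only [dotProduct, mulVec_diagonal]
  exact Finset.sum_congr rfl fun i _ => by ring

theorem sq_norm_toLp_mulVec_of_isHermitian {A : Matrix n n ℝ} (hA : A.IsHermitian) (x : n → ℝ) :
    ‖WithLp.toLp 2 (A *ᵥ x)‖ ^ 2 = x ⬝ᵥ (A * A) *ᵥ x := by
  rw [← real_inner_self_eq_norm_sq, EuclideanSpace.inner_toLp_toLp, star_trivial,
    ← mulVec_mulVec, dotProduct_mulVec x, ← mulVec_transpose,
    ← conjTranspose_eq_transpose_of_trivial, hA.eq]

theorem sq_norm_toLp_mulVec_of_mul_self_eq_vecMulVec {W : Matrix n n ℝ} (hW : W.IsHermitian)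
    {z : n → ℝ} (hWz : W * W = vecMulVec z z) (x : n → ℝ) :
    ‖WithLp.toLp 2 (W *ᵥ x)‖ ^ 2 = (z ⬝ᵥ x) ^ 2 := by
  rw [sq_norm_toLp_mulVec_of_isHermitian hW, hWz, vecMulVec_mulVec]
  simp [dotProduct_comm, sq]

theorem inv_transpose_mul_mul_of_transpose_mul_eq_one {R : Type*} [CommRing R] [DecidableEq n]
    {Q : Matrix n n R} (hQ : Qᵀ * Q = 1) (B : Matrix n n R) :
    (Qᵀ * B * Q)⁻¹ = Qᵀ * B⁻¹ * Q := by
  rw [mul_inv_rev, mul_inv_rev, inv_eq_left_inv hQ, inv_eq_left_inv (mul_eq_one_comm.mp hQ),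
    Matrix.mul_assoc]

theorem inv_diagonal_of_ne_zero {K : Type*} [Field K] [DecidableEq n] {v : n → K}
    (hv : ∀ i, v i ≠ 0) : (diagonal v)⁻¹ = diagonal v⁻¹ := by
  refine inv_eq_left_inv ?_
  rw [diagonal_mul_diagonal, ← diagonal_one]
  exact congrArg diagonal (funext fun i => inv_mul_cancel₀ (hv i))

theorem trace_transpose_mul_mul_of_transpose_mul_eq_one {R : Type*} [CommRing R] [DecidableEq n]
    {Q : Matrix n n R} (hQ : Qᵀ * Q = 1) (B : Matrix n n R) :
    (Qᵀ * B * Q).trace = B.trace := by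
  rw [trace_mul_cycle, mul_eq_one_comm.mp hQ, Matrix.one_mul]

theorem transpose_mul_diagonal_mul_add_smul_one {R : Type*} [CommRing R] [DecidableEq n]
    {Q : Matrix n n R} (hQ : Qᵀ * Q = 1) (d : n → R) (r : R) :
    Qᵀ * diagonal d * Q + r • 1 = Qᵀ * diagonal (fun i => d i + r) * Q := by
  rw [← diagonal_add, ← smul_one_eq_diagonal, Matrix.mul_add, Matrix.add_mul, Matrix.mul_smul,
    Matrix.smul_mul, Matrix.mul_one, hQ]

theorem posSemidef_transpose_mul_diagonal_inv_mul_sub_smul_sum_mul_sum [DecidableEq m]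
    {Z : Matrix m n ℝ} {c : m → ℝ} (hc : ∀ i, 0 < c i) {W : m → Matrix n n ℝ}
    (hW : ∀ i, (W i).IsHermitian) (hWZ : ∀ i, W i * W i = vecMulVec (Z i) (Z i)) :
    (Zᵀ * diagonal c⁻¹ * Z - (∑ i, c i)⁻¹ • ((∑ i, W i) * (∑ i, W i))).PosSemidef := by
  have hS : (∑ i, W i).IsHermitian := isSelfAdjoint_sum _ fun i _ => hW i
  have hZ : (Zᵀ * diagonal c⁻¹ * Z).IsHermitian := by
    simpa only [conjTranspose_eq_transpose_of_trivial] using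
      isHermitian_conjTranspose_mul_mul Z (isHermitian_diagonal c⁻¹)
  have hSS : ((∑ i, c i)⁻¹ • ((∑ i, W i) * (∑ i, W i))).IsHermitian := by
    refine IsHermitian.smul ?_ (IsSelfAdjoint.all _)
    rw [IsHermitian, conjTranspose_mul, hS.eq]
  refine .of_dotProduct_mulVec_nonneg (hZ.sub hSS) fun x => ?_
  simp only [star_trivial, sub_mulVec, dotProduct_sub, sub_nonneg, smul_mulVec, dotProduct_smul,
    smul_eq_mul]
  rw [dotProduct_transpose_mul_mul_mulVec, dotProduct_diagonal_mulVec,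
    ← sq_norm_toLp_mulVec_of_isHermitian hS, sum_mulVec, WithLp.toLp_sum, ← div_eq_inv_mul]
  calc ‖∑ i, WithLp.toLp 2 (W i *ᵥ x)‖ ^ 2 / ∑ i, c i
      ≤ ∑ i, ‖WithLp.toLp 2 (W i *ᵥ x)‖ ^ 2 / c i :=
        norm_sum_sq_div_le_sum_norm_sq_div _ _ fun i _ => hc i
    _ = ∑ i, c⁻¹ i * (Z *ᵥ x) i ^ 2 := by
        refine Finset.sum_congr rfl fun i _ => ?_
        rw [sq_norm_toLp_mulVec_of_mul_self_eq_vecMulVec (hW i) (hWZ i), Pi.inv_apply,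
          inv_mul_eq_div]
        rfl

end Matrix

theorem stmt5_general {n p : ℕ} (C : Matrix (Fin n) (Fin n) ℝ)
    (htr : C.trace = (n : ℝ)) (α : ℝ) (hα : α ∈ Set.Ioo (0 : ℝ) 1)
    (X : Matrix (Fin n) (Fin p) ℝ)
    (Q : Matrix (Fin n) (Fin n) ℝ) (hQ : Qᵀ * Q = 1)
    (d : Fin n → ℝ) (hd : ∀ i, 0 ≤ d i)
    (hCQ : C = Qᵀ * Matrix.diagonal d * Q)
    (W : Fin n → Matrix (Fin p) (Fin p) ℝ)
    (hW : ∀ i, (W i).PosSemidef)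
    (hWsq : ∀ i, W i * W i = Matrix.vecMulVec ((Q * X) i) ((Q * X) i)) :
    (Xᵀ * (C + (α⁻¹ - 1) • (1 : Matrix (Fin n) (Fin n) ℝ))⁻¹ * X -
      (α / n) • ((∑ i, W i) * (∑ i, W i))).PosSemidef := by
  obtain ⟨hα0, hα1⟩ := hα
  set c : Fin n → ℝ := fun i => d i + (α⁻¹ - 1)
  have hc : ∀ i, 0 < c i := fun i => by
    have := (one_lt_inv₀ hα0).mpr hα1
    linarith [hd i]
  have hsum : (∑ i, c i)⁻¹ = α / n := by
    have hd_sum : ∑ i, d i = n := by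
      rw [← trace_diagonal, ← trace_transpose_mul_mul_of_transpose_mul_eq_one hQ, ← hCQ, htr]
    simp only [c, Finset.sum_add_distrib, hd_sum, Finset.sum_const, Finset.card_univ,
      Fintype.card_fin, nsmul_eq_mul]
    field_simp
    ring
  have hJ : Xᵀ * (C + (α⁻¹ - 1) • (1 : Matrix (Fin n) (Fin n) ℝ))⁻¹ * X
      = (Q * X)ᵀ * diagonal c⁻¹ * (Q * X) := by
    rw [hCQ, transpose_mul_diagonal_mul_add_smul_one hQ,
      inv_transpose_mul_mul_of_transpose_mul_eq_one hQ, inv_diagonal_of_ne_zero fun i => (hc i).ne',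
      transpose_mul]
    simp only [Matrix.mul_assoc]
  rw [hJ, ← hsum]
  exact posSemidef_transpose_mul_diagonal_inv_mul_sub_smul_sum_mul_sum hc (fun i => (hW i).1) hWsq

/-- **Loewner-order lower bound `J(n) ⪰ α{(Σᵢ Vᵢ^{1/2})/√n}²` (proof of Remark S.3).**
Let `C` be symmetric PSD with `trace C = n`, `α ∈ (0,1)`, `X` an `n × p` real matrix.
Let `Q` be any orthogonal matrix and `d` any nonnegative diagonal with `C = Qᵀ(diag d)Q`;
let `zᵢᵀ` be the `i`-th row of `Z = QX`, `Vᵢ = zᵢzᵢᵀ`, and `Wᵢ` the PSD square root of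
`Vᵢ`. Then `Xᵀ(C + (α⁻¹ − 1)Iₙ)⁻¹X − (α/n)(Σᵢ Wᵢ)²` is positive semidefinite. -/
theorem stmt5 {n p : ℕ} (C : Matrix (Fin n) (Fin n) ℝ) (hC : C.PosSemidef)
    (htr : C.trace = (n : ℝ)) (α : ℝ) (hα : α ∈ Set.Ioo (0 : ℝ) 1)
    (X : Matrix (Fin n) (Fin p) ℝ)
    (Q : Matrix (Fin n) (Fin n) ℝ) (hQ : Qᵀ * Q = 1)
    (d : Fin n → ℝ) (hd : ∀ i, 0 ≤ d i)
    (hCQ : C = Qᵀ * Matrix.diagonal d * Q)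
    (W : Fin n → Matrix (Fin p) (Fin p) ℝ)
    (hW : ∀ i, (W i).PosSemidef)
    (hWsq : ∀ i, W i * W i = Matrix.vecMulVec ((Q * X) i) ((Q * X) i)) :
    (Xᵀ * (C + (α⁻¹ - 1) • (1 : Matrix (Fin n) (Fin n) ℝ))⁻¹ * X -
      (α / n) • ((∑ i, W i) * (∑ i, W i))).PosSemidef :=
  stmt5_general C htr α hα X Q hQ d hd hCQ W hW hWsq
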